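/- Let k be a field of prime characteristic p, S = k[x_0,…,x_n], and f ∈ S homogeneous of degree d > 0 with R = S/fS and m the image of (x_0,…,x_n). Set m(q) = ⌊((n+1)(q−1)+(d−1))/2⌋ and assume R attains the minimal Hilbert–Kunz function, i.e. max{ r : m^r ⊄ m^{[q]} } = m(q) for every q = p^e. Let Θ = S/(x_0^q,…,x_n^q) and θ = S/(fS + (x_0^q,…,x_n^q)), with degree-i graded pieces Θ_i and θ_i. Then for every q = p^e and every i ≤ m(q), the sequence 0 → Θ_{i−d} → Θ_i → θ_i → 0 is exact, where the first map is multiplication by f; in particular multiplication by f is injective from Θ_{i−d} to Θ_i for all i ≤ m(q). -/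

import Mathlib

set_option synthInstance.maxHeartbeats 1000000
set_option maxHeartbeats 1000000

open MvPolynomial

/-- The `q`-th Frobenius power of an ideal: the ideal generated by the `q`-th powers of
its elements. -/
noncomputable def frobPow {R : Type*} [CommRing R] (I : Ideal R) (q : ℕ) : Ideal R :=
  Ideal.span ((fun a => a ^ q) '' (I : Set R))

/-- `nu m J = max { r ∈ ℕ : m^r ⊄ J }`, the top socle degree of `R/J`. -/
noncomputable def nu {R : Type*} [CommRing R] (m J : Ideal R) : ℕ :=
  sSup {r : ℕ | ¬ m ^ r ≤ J}

/-- The Buchweitz–Chen bound `m(q) = ⌊((n+1)(q−1)+(d−1))/2⌋`. -/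
def mBC (n d q : ℕ) : ℕ := ((n + 1) * (q - 1) + (d - 1)) / 2

/-! Pulled back from `R = S/fS` to `S`, the hypothesis says `m^(m(q)+1) ⊆ fS + (x^q)`.
Modulo `(x^q)` every form `g ∉ (x^q)` of degree `j` has a monomial multiple `x^c g ∉ (x^q)`
reaching the socle degree `(n+1)(q-1)`, so `deg x^c = (n+1)(q-1) - j`. If moreover
`f g ∈ (x^q)`, then `x^c ∉ fS + (x^q)`, hence `deg x^c ≤ m(q)`; for `j = i - d` with
`i ≤ m(q)` this contradicts the definition of `m(q)`. Exactness at `Θ_i` only uses that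
`(x^q)` is a homogeneous ideal: take degree-`i` components in `g = c f + b`. -/

section FrobeniusPower

variable {R : Type*} [CommRing R]

theorem pow_nu_succ_le {I J : Ideal R} (h : ∃ r, I ^ r ≤ J) : I ^ (nu I J + 1) ≤ J := by
  obtain ⟨r, hr⟩ := h
  have hbdd : BddAbove {s : ℕ | ¬ I ^ s ≤ J} :=
    ⟨r, fun s hs => not_lt.1 fun hrs => hs ((Ideal.pow_le_pow_right hrs.le).trans hr)⟩
  by_contra hle
  exact Nat.not_succ_le_self _ (le_csSup hbdd hle)

theorem exists_pow_le_frobPow {I : Ideal R} (hI : I.FG) (q : ℕ) : ∃ r, I ^ r ≤ frobPow I q :=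
  Ideal.exists_pow_le_of_le_radical_of_fg
    (fun a ha => ⟨q, Ideal.subset_span ⟨a, ha, rfl⟩⟩) hI

theorem frobPow_map_of_surjective {S : Type*} [CommRing S] {φ : R →+* S}
    (hφ : Function.Surjective φ) (I : Ideal R) (q : ℕ) :
    frobPow (I.map φ) q = (frobPow I q).map φ := by
  have hI : ((I.map φ : Ideal S) : Set S) = φ '' I := by
    ext y; exact Ideal.mem_map_iff_of_surjective φ hφ
  rw [frobPow, frobPow, Ideal.map_span, hI, Set.image_image, Set.image_image]
  simp only [map_pow]

theorem frobPow_span_of_charP {p : ℕ} [Fact p.Prime] [CharP R p] (s : Set R) (e : ℕ) :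
    frobPow (Ideal.span s) (p ^ e) = Ideal.span ((· ^ (p ^ e)) '' s) := by
  refine le_antisymm (Ideal.span_le.2 ?_) (Ideal.span_mono (Set.image_mono Ideal.subset_span))
  rintro _ ⟨a, ha, rfl⟩
  have : Ideal.span s ≤ (Ideal.span ((· ^ (p ^ e)) '' s)).comap (iterateFrobenius R p e) :=
    Ideal.span_le.2 fun b hb => Ideal.subset_span ⟨b, hb, rfl⟩
  exact this ha

theorem pow_succ_le_sup_of_nu_frobPow_eq {p : ℕ} [Fact p.Prime] [CharP R p] {s : Set R}
    (hs : s.Finite) (K : Ideal R) {e M : ℕ}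
    (h : nu ((Ideal.span s).map (Ideal.Quotient.mk K))
      (frobPow ((Ideal.span s).map (Ideal.Quotient.mk K)) (p ^ e)) = M) :
    Ideal.span s ^ (M + 1) ≤ K ⊔ Ideal.span ((· ^ (p ^ e)) '' s) := by
  have hpow := pow_nu_succ_le (exists_pow_le_frobPow (Ideal.FG.map (Submodule.fg_span hs)
    (Ideal.Quotient.mk K)) (p ^ e))
  rw [h, frobPow_map_of_surjective Ideal.Quotient.mk_surjective, frobPow_span_of_charP,
    ← Ideal.map_pow, Ideal.map_le_iff_le_comap,
    Ideal.comap_map_of_surjective' _ Ideal.Quotient.mk_surjective, Ideal.mk_ker] at hpow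
  exact hpow.trans_eq (sup_comm _ _)

end FrobeniusPower

namespace MvPolynomial

variable {σ R : Type*} [CommRing R]

theorem mem_span_X_pow_iff {q : ℕ} {w : MvPolynomial σ R} :
    w ∈ Ideal.span (Set.range fun j => (X j : MvPolynomial σ R) ^ q) ↔
      ∀ a ∈ w.support, ∃ j, q ≤ a j := by
  have : (Set.range fun j => (X j : MvPolynomial σ R) ^ q) =
      (fun s => monomial s (1 : R)) '' Set.range fun j => Finsupp.single j q := by
    simp only [← Set.range_comp, Function.comp_def, X_pow_eq_monomial]
  simp only [this, mem_ideal_span_monomial_image, Set.exists_range_iff, Finsupp.single_le_iff]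

theorem exists_monomial_mul_notMem_span_X_pow [Fintype σ] {q j : ℕ} {g : MvPolynomial σ R}
    (hg : g.IsHomogeneous j)
    (hgJ : g ∉ Ideal.span (Set.range fun l => (X l : MvPolynomial σ R) ^ q)) :
    ∃ c : σ →₀ ℕ, c.degree + j = Fintype.card σ * (q - 1) ∧
      g * monomial c 1 ∉ Ideal.span (Set.range fun l => (X l : MvPolynomial σ R) ^ q) := by
  simp only [mem_span_X_pow_iff, not_forall, not_exists, not_le] at hgJ ⊢
  obtain ⟨a, ha, hlt⟩ := hgJ
  -- `c + a = (q - 1, …, q - 1)` is the exponent of the socle monomial of `S/(x^q)`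
  let c : σ →₀ ℕ := Finsupp.equivFunOnFinite.symm fun l => q - 1 - a l
  have hca : ∀ l, (c + a) l = q - 1 := fun l => by
    simp only [Finsupp.add_apply, c, Finsupp.equivFunOnFinite_symm_apply_apply]
    have := hlt l; omega
  refine ⟨c, ?_, c + a, ?_, fun l => (hca l).trans_lt (by have := hlt l; omega)⟩
  · have had : a.degree = j := (hg.degree_eq_sum_deg_support ha).symm
    rw [← had, ← map_add, Finsupp.degree_eq_sum]
    simp [hca]
  · rw [mem_support_iff, coeff_mul_monomial', if_pos le_self_add, add_tsub_cancel_left, mul_one]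
    exact mem_support_iff.1 ha

theorem mem_span_X_pow_of_mul_mem [Fintype σ] {q j r : ℕ} {f g : MvPolynomial σ R}
    (hg : g.IsHomogeneous j) (hrj : r + j ≤ Fintype.card σ * (q - 1))
    (hr : idealOfVars σ R ^ r ≤
      Ideal.span {f} ⊔ Ideal.span (Set.range fun l => (X l : MvPolynomial σ R) ^ q))
    (hfg : f * g ∈ Ideal.span (Set.range fun l => (X l : MvPolynomial σ R) ^ q)) :
    g ∈ Ideal.span (Set.range fun l => (X l : MvPolynomial σ R) ^ q) := by
  by_contra hgJ
  obtain ⟨c, hc, hgc⟩ := exists_monomial_mul_notMem_span_X_pow hg hgJ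
  have hcr : monomial c (1 : R) ∈ idealOfVars σ R ^ r :=
    (mem_pow_idealOfVars_iff r _).2 fun x hx => by
      rw [Finset.mem_singleton.1 (support_monomial_subset hx)]; omega
  obtain ⟨_, hv, b, hb, hvb⟩ := Submodule.mem_sup.1 (hr hcr)
  obtain ⟨t, rfl⟩ := Ideal.mem_span_singleton'.1 hv
  refine hgc ?_
  rw [← hvb, mul_add, mul_left_comm, mul_comm g f]
  exact Ideal.add_mem _ (Ideal.mul_mem_left _ _ hfg) (Ideal.mul_mem_left _ _ hb)

attribute [local instance] gradedAlgebra

theorem isHomogeneous_span_X_pow (q : ℕ) :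
    (Ideal.span (Set.range fun j => (X j : MvPolynomial σ R) ^ q)).IsHomogeneous
      (homogeneousSubmodule σ R) :=
  Ideal.homogeneous_span _ _ <| Set.forall_mem_range.2 fun j => ⟨q, isHomogeneous_X_pow j q⟩

theorem homogeneousComponent_mul_of_le {f : MvPolynomial σ R} {d i : ℕ}
    (hf : f.IsHomogeneous d) (hdi : d ≤ i) (c : MvPolynomial σ R) :
    homogeneousComponent i (f * c) = f * homogeneousComponent (i - d) c := by
  rw [← decomposition.decompose'_apply, ← decomposition.decompose'_apply]
  exact DirectSum.coe_decompose_mul_of_left_mem_of_le (homogeneousSubmodule σ R) hf hdi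

theorem homogeneousComponent_mul_of_lt {f : MvPolynomial σ R} {d i : ℕ}
    (hf : f.IsHomogeneous d) (hid : i < d) (c : MvPolynomial σ R) :
    homogeneousComponent i (f * c) = 0 := by
  rw [← decomposition.decompose'_apply]
  exact DirectSum.coe_decompose_mul_of_left_mem_of_not_le (homogeneousSubmodule σ R) hf
    (not_le.2 hid)

theorem exists_sub_homogeneousComponent_mul_mem {I : Ideal (MvPolynomial σ R)}
    (hI : I.IsHomogeneous (homogeneousSubmodule σ R)) {f g : MvPolynomial σ R} {i : ℕ}
    (hg : g.IsHomogeneous i) (hgI : g ∈ Ideal.span {f} ⊔ I) :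
    ∃ c, g - homogeneousComponent i (f * c) ∈ I := by
  obtain ⟨_, hv, b, hb, rfl⟩ := Submodule.mem_sup.1 hgI
  obtain ⟨c, rfl⟩ := Ideal.mem_span_singleton'.1 hv
  refine ⟨c, ?_⟩
  rw [← homogeneousComponent_eq_self hg, map_add, mul_comm, add_sub_cancel_left]
  exact homogeneousComponent_mem_of_mem hI hb i

end MvPolynomial

/-- **For a hypersurface attaining the minimal Hilbert–Kunz function, the sequences
`0 → Θ_{i−d} → Θ_i → θ_i → 0` are exact for `i ≤ m(q)`.**  Here `Θ = S/(x_0^q,…,x_n^q)`,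
`θ = S/(fS + (x_0^q,…,x_n^q))`, the first map is multiplication by `f` and the second is
the natural projection (with `Θ_{i−d} = 0` for `i < d`).  Exactness is expressed
componentwise on homogeneous polynomials:
* (injectivity of `·f : Θ_{i−d} → Θ_i`) if `g` is homogeneous of degree `i−d` and
  `f·g ∈ (x^q)`, then `g ∈ (x^q)`;
* (exactness at `Θ_i`, case `d ≤ i`) every homogeneous `g` of degree `i` lying in
  `fS + (x^q)` is congruent mod `(x^q)` to `f·h` with `h` homogeneous of degree `i−d`;
* (exactness at `Θ_i`, case `i < d`, where `Θ_{i−d} = 0`) every homogeneous `g` of degree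
  `i` lying in `fS + (x^q)` already lies in `(x^q)`.
(The surjectivity of `Θ_i → θ_i` holds by definition of `θ` as a quotient of `Θ`.) -/
theorem exact_graded_pieces_of_minimal_hilbertKunz
    (n d : ℕ) (hd : 0 < d)
    (p : ℕ) (hp : p.Prime) (k : Type*) [Field k] [CharP k p]
    (f : MvPolynomial (Fin (n + 1)) k) (hf : f.IsHomogeneous d)
    -- `R = S/fS` attains the minimal Hilbert–Kunz function
    (hmin : ∀ e : ℕ,
      nu ((Ideal.span (Set.range (X : Fin (n + 1) → MvPolynomial (Fin (n + 1)) k))).map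
            (Ideal.Quotient.mk (Ideal.span {f})))
          (frobPow
            ((Ideal.span (Set.range (X : Fin (n + 1) → MvPolynomial (Fin (n + 1)) k))).map
              (Ideal.Quotient.mk (Ideal.span {f})))
            (p ^ e))
        = mBC n d (p ^ e)) :
    ∀ e : ℕ, ∀ i : ℕ, i ≤ mBC n d (p ^ e) →
      -- injectivity of multiplication by `f` from `Θ_{i−d}` to `Θ_i` (for all `i ≤ m(q)`)
      ((d ≤ i → ∀ g : MvPolynomial (Fin (n + 1)) k, g.IsHomogeneous (i - d) →
          f * g ∈ Ideal.span (Set.range fun j : Fin (n + 1) =>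
            (X j : MvPolynomial (Fin (n + 1)) k) ^ (p ^ e)) →
          g ∈ Ideal.span (Set.range fun j : Fin (n + 1) =>
            (X j : MvPolynomial (Fin (n + 1)) k) ^ (p ^ e))) ∧
      -- exactness at `Θ_i` when `d ≤ i`
      (d ≤ i → ∀ g : MvPolynomial (Fin (n + 1)) k, g.IsHomogeneous i →
          g ∈ Ideal.span {f} ⊔ Ideal.span (Set.range fun j : Fin (n + 1) =>
            (X j : MvPolynomial (Fin (n + 1)) k) ^ (p ^ e)) →
          ∃ h : MvPolynomial (Fin (n + 1)) k, h.IsHomogeneous (i - d) ∧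
            g - f * h ∈ Ideal.span (Set.range fun j : Fin (n + 1) =>
              (X j : MvPolynomial (Fin (n + 1)) k) ^ (p ^ e))) ∧
      -- exactness at `Θ_i` when `i < d` (then `Θ_{i−d} = 0`)
      (i < d → ∀ g : MvPolynomial (Fin (n + 1)) k, g.IsHomogeneous i →
          g ∈ Ideal.span {f} ⊔ Ideal.span (Set.range fun j : Fin (n + 1) =>
            (X j : MvPolynomial (Fin (n + 1)) k) ^ (p ^ e)) →
          g ∈ Ideal.span (Set.range fun j : Fin (n + 1) =>
            (X j : MvPolynomial (Fin (n + 1)) k) ^ (p ^ e)))) := by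
  have : Fact p.Prime := ⟨hp⟩
  intro e i hi
  have hsocle := pow_succ_le_sup_of_nu_frobPow_eq (Set.finite_range _) _ (hmin e)
  rw [← Set.range_comp] at hsocle
  have hJ := isHomogeneous_span_X_pow (σ := Fin (n + 1)) (R := k) (p ^ e)
  refine ⟨fun hdi g hg hfg => mem_span_X_pow_of_mul_mem hg ?_ hsocle hfg,
    fun hdi g hg hgI => ?_, fun hid g hg hgI => ?_⟩
  · simp only [mBC, Fintype.card_fin] at hi ⊢
    omega
  · obtain ⟨c, hc⟩ := exists_sub_homogeneousComponent_mul_mem hJ hg hgI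
    rw [homogeneousComponent_mul_of_le hf hdi] at hc
    exact ⟨_, homogeneousComponent_isHomogeneous _ _, hc⟩
  · obtain ⟨c, hc⟩ := exists_sub_homogeneousComponent_mul_mem hJ hg hgI
    rwa [homogeneousComponent_mul_of_lt hf hid, sub_zero] at hc
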